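/- There exist reals a, b > 0, η > 0, a price cap p̄ with b/(2a) < p̄ and b − (a+η)·p̄ ≥ 0, a starting reference price r1 ∈ [0,p̄], a constant c > 0, and T0 ∈ ℕ such that the following holds for the ARM model with linear demand H(p) = b − a·p and symmetric reference effects η⁺ = η⁻ = η: for every horizon T ≥ T0 and every fixed price p ∈ [0,p̄], the optimal T-round revenue exceeds the T-round revenue of the constant price sequence (p, p, …, p) by at least c·T; that is, V*(r1, 1) − V^{(p,…,p)}(r1, 1) ≥ c·T. (Every fixed-price policy suffers revenue loss growing linearly in the horizon under the averaging reference mechanism.) -/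

import Mathlib

/-- ARM reference price at time `t`, starting from reference price `r` at time `t1`:
`r_t = (t1·r + Σ_{s=t1}^{t−1} p_s)/t`. -/
noncomputable def armRef (t1 : ℕ) (r : ℝ) (p : ℕ → ℝ) (t : ℕ) : ℝ :=
  ((t1 : ℝ) * r + ∑ s ∈ Finset.Ico t1 t, p s) / (t : ℝ)

/-- Single-round expected revenue `Π(x, r)` with base demand `H` and reference effects. -/
noncomputable def armRev (H : ℝ → ℝ) (ηp ηm : ℝ) (x r : ℝ) : ℝ :=
  x * (H x + ηp * max (r - x) 0 - ηm * max (x - r) 0)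

/-- Total ARM revenue `V^p(r, t1)` of price sequence `p` over rounds `t1..T`. -/
noncomputable def armV (H : ℝ → ℝ) (ηp ηm : ℝ) (t1 T : ℕ) (r : ℝ) (p : ℕ → ℝ) : ℝ :=
  ∑ t ∈ Finset.Icc t1 T, armRev H ηp ηm (p t) (armRef t1 r p t)

/-- Optimal ARM revenue `V*(r, 1)` over horizon `T`. -/
noncomputable def armVStar (H : ℝ → ℝ) (ηp ηm : ℝ) (t1 T : ℕ) (pbar r : ℝ) : ℝ :=
  sSup {x : ℝ | ∃ p : ℕ → ℝ,
    (∀ t ∈ Finset.Icc t1 T, p t ∈ Set.Icc 0 pbar) ∧ x = armV H ηp ηm t1 T r p}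


/-!
Take `H(p) = 2 - p`, `η = 2/3`, `p̄ = 6/5` and `r₁ = 0`. Under ARM the reference price
starting from `0` never exceeds a fixed price `p`, so the reference effect only hurts and a fixed
price earns at most `p (2 - p) ≤ 1` per round. The policy that charges `6/5` for the first
`K = T / 2` rounds and the myopic price `1` afterwards loses only about `1/25` per round while
building up the reference price to `6/5`, and then collects a reference bonus of order `K / t`
in every round `t ∈ (K, T]`, which sums to a fixed fraction of `T`.
-/

open Finset

lemma armRev_symm (H : ℝ → ℝ) (η x r : ℝ) :
    armRev H η η x r = x * (H x + η * (r - x)) := by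
  unfold armRev
  rcases le_total x r with h | h
  · rw [max_eq_left (by linarith), max_eq_right (by linarith)]; ring
  · rw [max_eq_right (by linarith), max_eq_left (by linarith)]; ring

lemma armRev_le_of_le {H : ℝ → ℝ} {ηp ηm x r : ℝ} (hx : 0 ≤ x) (hηm : 0 ≤ ηm) (hr : r ≤ x) :
    armRev H ηp ηm x r ≤ x * H x := by
  unfold armRev
  rw [max_eq_right (by linarith), max_eq_left (by linarith)]
  nlinarith [mul_nonneg hηm (sub_nonneg.2 hr)]

lemma continuous_armRev {H : ℝ → ℝ} (hH : Continuous H) (ηp ηm : ℝ) :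
    Continuous fun q : ℝ × ℝ => armRev H ηp ηm q.1 q.2 := by
  unfold armRev
  fun_prop

section armRef

variable {r q : ℝ} {p : ℕ → ℝ} {t : ℕ}

lemma armRef_le (ht : 1 ≤ t) (hr : r ≤ q) (hp : ∀ s ∈ Ico 1 t, p s ≤ q) :
    armRef 1 r p t ≤ q := by
  have htpos : (0 : ℝ) < t := by exact_mod_cast ht
  have hsum : ∑ s ∈ Ico 1 t, p s ≤ ((t : ℝ) - 1) * q := by
    calc ∑ s ∈ Ico 1 t, p s ≤ (Ico 1 t).card • q := sum_le_card_nsmul _ _ _ hp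
      _ = ((t : ℝ) - 1) * q := by rw [Nat.card_Ico, nsmul_eq_mul, Nat.cast_sub ht]; simp
  rw [armRef, div_le_iff₀ htpos]
  push_cast
  linarith

lemma le_armRef (ht : 1 ≤ t) (hr : q ≤ r) (hp : ∀ s ∈ Ico 1 t, q ≤ p s) :
    q ≤ armRef 1 r p t := by
  have htpos : (0 : ℝ) < t := by exact_mod_cast ht
  have hsum : ((t : ℝ) - 1) * q ≤ ∑ s ∈ Ico 1 t, p s := by
    calc ((t : ℝ) - 1) * q = (Ico 1 t).card • q := by
          rw [Nat.card_Ico, nsmul_eq_mul, Nat.cast_sub ht]; simp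
      _ ≤ ∑ s ∈ Ico 1 t, p s := card_nsmul_le_sum _ _ _ hp
  rw [armRef, le_div_iff₀ htpos]
  push_cast
  linarith

end armRef

lemma armV_le_card_mul {H : ℝ → ℝ} {ηp ηm r M : ℝ} {T : ℕ} {p : ℕ → ℝ}
    (h : ∀ t ∈ Icc 1 T, armRev H ηp ηm (p t) (armRef 1 r p t) ≤ M) :
    armV H ηp ηm 1 T r p ≤ T * M := by
  calc armV H ηp ηm 1 T r p ≤ (Icc 1 T).card • M := sum_le_card_nsmul _ _ _ h
    _ = T * M := by simp

lemma armV_const_le {H : ℝ → ℝ} {ηp ηm r p : ℝ} (T : ℕ) (hp : 0 ≤ p) (hηm : 0 ≤ ηm)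
    (hr : r ≤ p) :
    armV H ηp ηm 1 T r (fun _ => p) ≤ T * (p * H p) :=
  armV_le_card_mul fun _ ht =>
    armRev_le_of_le hp hηm (armRef_le (mem_Icc.1 ht).1 hr fun _ _ => le_rfl)

lemma armV_le_armVStar {H : ℝ → ℝ} (hH : Continuous H) {ηp ηm pbar r : ℝ} {T : ℕ}
    {p : ℕ → ℝ} (hr : r ∈ Set.Icc 0 pbar) (hp : ∀ t ∈ Icc 1 T, p t ∈ Set.Icc 0 pbar) :
    armV H ηp ηm 1 T r p ≤ armVStar H ηp ηm 1 T pbar r := by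
  obtain ⟨M, hM⟩ := (isCompact_Icc (a := 0) (b := pbar)).prod isCompact_Icc |>.bddAbove_image
    (continuous_armRev hH ηp ηm).continuousOn
  refine le_csSup ⟨T * M, ?_⟩ ⟨p, hp, rfl⟩
  rintro _ ⟨p', hp', rfl⟩
  refine armV_le_card_mul fun t ht => hM ⟨(p' t, armRef 1 r p' t), ⟨hp' t ht, ?_⟩, rfl⟩
  obtain ⟨ht1, htT⟩ := mem_Icc.1 ht
  have hsub : ∀ s ∈ Ico 1 t, p' s ∈ Set.Icc 0 pbar := fun s hs => by
    obtain ⟨hs1, hst⟩ := mem_Ico.1 hs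
    exact hp' s (mem_Icc.2 ⟨hs1, by omega⟩)
  exact ⟨le_armRef ht1 hr.1 fun s hs => (hsub s hs).1,
    armRef_le ht1 hr.2 fun s hs => (hsub s hs).2⟩

def twoPhase (K : ℕ) (hi lo : ℝ) (s : ℕ) : ℝ := if s ≤ K then hi else lo

section twoPhase

variable {K t : ℕ} {hi lo r : ℝ}

lemma armRef_twoPhase_of_le (ht : 1 ≤ t) (htK : t ≤ K + 1) :
    armRef 1 r (twoPhase K hi lo) t = (r + ((t : ℝ) - 1) * hi) / t := by
  have hconst : ∀ s ∈ Ico 1 t, twoPhase K hi lo s = hi := fun s hs =>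
    if_pos (by have := (mem_Ico.1 hs).2; omega)
  rw [armRef, sum_congr rfl hconst, sum_const, Nat.card_Ico, nsmul_eq_mul, Nat.cast_sub ht]
  simp

lemma armRef_twoPhase_of_lt (hKt : K < t) :
    armRef 1 r (twoPhase K hi lo) t = (r + K * hi + ((t : ℝ) - 1 - K) * lo) / t := by
  have hhi : ∀ s ∈ Ico 1 (K + 1), twoPhase K hi lo s = hi := fun s hs =>
    if_pos (by have := (mem_Ico.1 hs).2; omega)
  have hlo : ∀ s ∈ Ico (K + 1) t, twoPhase K hi lo s = lo := fun s hs =>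
    if_neg (by have := (mem_Ico.1 hs).1; omega)
  rw [armRef, ← sum_Ico_consecutive _ (by omega : 1 ≤ K + 1) hKt, sum_congr rfl hhi,
    sum_congr rfl hlo, sum_const, sum_const, Nat.card_Ico, Nat.card_Ico, nsmul_eq_mul,
    nsmul_eq_mul, Nat.cast_sub hKt]
  push_cast
  ring

lemma twoPhase_mem_Icc {pbar : ℝ} (hhi : hi ∈ Set.Icc 0 pbar) (hlo : lo ∈ Set.Icc 0 pbar)
    (s : ℕ) : twoPhase K hi lo s ∈ Set.Icc 0 pbar := by
  unfold twoPhase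
  split_ifs
  exacts [hhi, hlo]

end twoPhase

section LinearDemand

local notation "rev₀" K:max t:max => armRev (fun x : ℝ => 2 - 1 * x) (2/3) (2/3)
  (twoPhase K (6/5) 1 t) (armRef 1 0 (twoPhase K (6/5) 1) t)

variable {K t : ℕ}

lemma armRev_twoPhase_of_le (ht : 1 ≤ t) (htK : t ≤ K) : rev₀ K t = 24/25 * (1 - 1 / t) := by
  have htpos : (0 : ℝ) < t := by exact_mod_cast ht
  rw [armRev_symm, armRef_twoPhase_of_le ht (by omega), twoPhase, if_pos htK]
  field_simp
  ring

lemma armRev_twoPhase_of_lt (hKt : K < t) : rev₀ K t = 1 + 2/3 * ((K / 5 - 1) / t) := by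
  have htpos : (0 : ℝ) < t := by exact_mod_cast (by omega : 0 < t)
  rw [armRev_symm, armRef_twoPhase_of_lt hKt, twoPhase, if_neg (by omega)]
  field_simp
  ring

lemma sub_mul_le_sum_Ioc {f : ℕ → ℝ} {m n : ℕ} {c : ℝ} (hmn : m ≤ n)
    (h : ∀ t ∈ Ioc m n, c ≤ f t) : ((n : ℝ) - m) * c ≤ ∑ t ∈ Ioc m n, f t := by
  have := card_nsmul_le_sum _ _ _ h
  rwa [Nat.card_Ioc, nsmul_eq_mul, Nat.cast_sub hmn] at this

/-- The first `100` rounds are bounded below by `0`, the others by their value at `t = 100`. -/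
lemma sum_armRev_twoPhase_Ioc_zero_ge (hK : 100 ≤ K) :
    ((K : ℝ) - 100) * (24/25 * (1 - 1/100)) ≤ ∑ t ∈ Ioc 0 K, rev₀ K t := by
  calc ((K : ℝ) - 100) * (24/25 * (1 - 1/100))
      = ((100 : ℕ) - (0 : ℕ) : ℝ) * 0 + ((K : ℝ) - (100 : ℕ)) * (24/25 * (1 - 1/100)) := by
        push_cast; ring
    _ ≤ ∑ t ∈ Ioc 0 100, rev₀ K t + ∑ t ∈ Ioc 100 K, rev₀ K t := by
      gcongr
      · refine sub_mul_le_sum_Ioc (Nat.zero_le 100) fun t ht => ?_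
        obtain ⟨ht0, ht100⟩ := mem_Ioc.1 ht
        have ht1 : (1 : ℝ) ≤ t := by exact_mod_cast ht0
        rw [armRev_twoPhase_of_le ht0 (by omega)]
        have : 1 / (t : ℝ) ≤ 1 := by rw [div_le_one (by linarith)]; exact ht1
        linarith
      · refine sub_mul_le_sum_Ioc hK fun t ht => ?_
        obtain ⟨ht100, htK⟩ := mem_Ioc.1 ht
        have ht100' : (100 : ℝ) ≤ t := by exact_mod_cast ht100.le
        rw [armRev_twoPhase_of_le (by omega) htK]
        have : 1 / (t : ℝ) ≤ 1 / 100 := one_div_le_one_div_of_le (by norm_num) ht100'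
        linarith
    _ = ∑ t ∈ Ioc 0 K, rev₀ K t := sum_Ioc_consecutive _ (Nat.zero_le 100) hK

lemma sum_armRev_twoPhase_Ioc_ge {T : ℕ} (hK : 5 ≤ K) (hKT : K ≤ T) :
    ((T : ℝ) - K) * (1 + 2/3 * ((K / 5 - 1) / T)) ≤ ∑ t ∈ Ioc K T, rev₀ K t :=
  sub_mul_le_sum_Ioc hKT fun t ht => by
    obtain ⟨hKt, htT⟩ := mem_Ioc.1 ht
    rw [armRev_twoPhase_of_lt hKt]
    have hK5 : (5 : ℝ) ≤ K := by exact_mod_cast hK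
    have htpos : (0 : ℝ) < t := by exact_mod_cast (by omega : 0 < t)
    have : ((K : ℝ) / 5 - 1) / T ≤ (K / 5 - 1) / t :=
      div_le_div_of_nonneg_left (by linarith) htpos (by exact_mod_cast htT)
    linarith

lemma armV_twoPhase_ge {T : ℕ} (hT : 100000 ≤ T) :
    (T : ℝ) + T / 250 ≤
      armV (fun x => 2 - 1 * x) (2/3) (2/3) 1 T 0 (twoPhase (T / 2) (6/5) 1) := by
  set K := T / 2
  have hKT : K ≤ T := by omega
  have hTK : (T : ℝ) ≤ 2 * K + 1 := by exact_mod_cast (by omega : T ≤ 2 * K + 1)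
  have hKT' : 2 * (K : ℝ) ≤ T := by exact_mod_cast (by omega : 2 * K ≤ T)
  have hT' : (100000 : ℝ) ≤ T := by exact_mod_cast hT
  have hbuild := sum_armRev_twoPhase_Ioc_zero_ge (K := K) (by omega)
  have hexploit := sum_armRev_twoPhase_Ioc_ge (by omega) hKT
  have hbonus : ((K : ℝ) / 5 - 1) / 2 ≤ (T - K) * ((K / 5 - 1) / T) := by
    have : ((T : ℝ) - K) * ((K / 5 - 1) / T) - (K / 5 - 1) / 2 =
        (T - 2 * K) * (K / 5 - 1) / (2 * T) := by field_simp; ring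
    rw [← sub_nonneg, this]
    exact div_nonneg (mul_nonneg (by linarith) (by linarith)) (by linarith)
  rw [armV, show Icc 1 T = Ioc 0 T from Icc_add_one_left_eq_Ioc 0 T,
    ← sum_Ioc_consecutive _ (Nat.zero_le K) hKT]
  nlinarith

end LinearDemand

/-- Under ARM with linear demand and symmetric (loss-neutral) reference effects, there is
an instance on which every fixed-price policy loses revenue linear in the horizon compared
to the optimal policy. -/
theorem fixed_price_linear_regret :
    ∃ (a b η pbar r1 c : ℝ) (T0 : ℕ),
      0 < a ∧ 0 < b ∧ 0 < η ∧ 0 < pbar ∧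
      b / (2 * a) < pbar ∧ 0 ≤ b - (a + η) * pbar ∧
      r1 ∈ Set.Icc 0 pbar ∧ 0 < c ∧
      ∀ T : ℕ, T0 ≤ T → ∀ p ∈ Set.Icc (0 : ℝ) pbar,
        c * (T : ℝ) ≤
          armVStar (fun x => b - a * x) η η 1 T pbar r1 -
            armV (fun x => b - a * x) η η 1 T r1 (fun _ => p) := by
  refine ⟨1, 2, 2/3, 6/5, 0, 1/250, 100000, by norm_num, by norm_num, by norm_num, by norm_num,
    by norm_num, by norm_num, ⟨le_rfl, by norm_num⟩, by norm_num, fun T hT p hp => ?_⟩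
  have hfixed : armV (fun x => 2 - 1 * x) (2/3) (2/3) 1 T 0 (fun _ => p) ≤ T := by
    refine (armV_const_le T hp.1 (by norm_num) hp.1).trans ?_
    nlinarith [sq_nonneg (p - 1), (Nat.cast_nonneg T : (0 : ℝ) ≤ T)]
  have hoptimal : (T : ℝ) + T / 250 ≤ armVStar (fun x => 2 - 1 * x) (2/3) (2/3) 1 T (6/5) 0 :=
    (armV_twoPhase_ge hT).trans <| armV_le_armVStar (by fun_prop) ⟨le_rfl, by norm_num⟩
      fun t _ => twoPhase_mem_Icc (by norm_num) (by norm_num) t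
  linarith
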